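/- arXiv:1509.01128 — 3 statements merged into one kernel-verified Lean document; each statement's English description precedes it below -/
import Mathlib

section
/- Let 0 ≤ s ≤ t ≤ d, δ > 0, and let P₀ ⊆ B(0,1) ⊆ ℝ^d be a δ-separated set with |P₀| ≥ c δ^{−t} and |P₀ ∩ B(x,r)| ≤ C (r/δ)^t for all x ∈ ℝ^d and r ≥ δ, where 0 < c < C < ∞. Then there exists a subset P ⊆ P₀ with |P| ≥ κ_d (c/C) δ^{−s} satisfying |P ∩ B(x,r)| ≤ K_d (r/δ)^s for all x ∈ ℝ^d and r ≥ δ, where κ_d > 0 and K_d < ∞ are constants depending only on d. -/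
open Metric Set

/-- A set is `δ`-separated if distinct points are at distance at least `δ`. -/
def IsSeparated' {X : Type*} [PseudoMetricSpace X] (δ : ℝ) (P : Set X) : Prop :=
  ∀ p ∈ P, ∀ q ∈ P, p ≠ q → δ ≤ dist p q

/-!
Let `2⁻ᵐ ≈ δ` and give each dyadic cube of side `2⁻ʲ`, `j ≤ m`, the capacity
`⌈(2⁻ʲ / δ) ^ s⌉`. A largest `P ⊆ P₀` with at most that many points in every such cube is an
`s`-dimensional Katz–Tao set, because a ball of radius `r ≈ 2⁻ʲ` meets at most `3 ^ d` cubes of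
side `2⁻ʲ`. By maximality, every point of `P₀ \ P` lies in a cube that is full for `P`; the
coarsest such cubes are pairwise disjoint, and by the `t`-dimensional bound each of them holds
at most `C (1 + √d) ^ d δ ^ (s - t)` times as many points of `P₀` as of `P`. Summing gives
`|P₀| ≲ C δ ^ (s - t) |P|`, i.e. the lower bound on `|P|`. For `δ > 1` one point suffices.
-/

def IsKatzTaoSet {X : Type*} [PseudoMetricSpace X] (δ t C : ℝ) (P : Set X) : Prop :=
  ∀ x r, δ ≤ r → ((P ∩ ball x r).ncard : ℝ) ≤ C * (r / δ) ^ t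

section KatzTao

variable {X : Type*} [PseudoMetricSpace X]

theorem IsKatzTaoSet.one_le {δ t C : ℝ} {P : Set X} (hP : IsKatzTaoSet δ t C P)
    (hfin : P.Finite) (hδ : 0 < δ) {p : X} (hp : p ∈ P) : 1 ≤ C := by
  have h := hP p δ le_rfl
  rw [div_self hδ.ne', Real.one_rpow, mul_one] at h
  have : 0 < (P ∩ ball p δ).ncard :=
    (Set.ncard_pos (hfin.inter_of_left _)).2 ⟨p, hp, mem_ball_self hδ⟩
  exact le_trans (by exact_mod_cast this) h

theorem isKatzTaoSet_singleton {δ s K : ℝ} (hδ : 0 < δ) (hs : 0 ≤ s) (hK : 1 ≤ K) (p : X) :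
    IsKatzTaoSet δ s K {p} := by
  intro x r hr
  calc (((({p} : Set X) ∩ ball x r).ncard : ℕ) : ℝ) ≤ 1 := by
        exact_mod_cast (Set.ncard_le_ncard Set.inter_subset_left (Set.finite_singleton p)).trans
          (Set.ncard_singleton p).le
    _ ≤ K * (r / δ) ^ s :=
        one_le_mul_of_one_le_of_one_le hK (Real.one_le_rpow ((one_le_div hδ).2 hr) hs)

end KatzTao

section Cells

variable {α β : Type*} [DecidableEq β] (cell : ℕ → α → β) (b : ℕ → ℕ) (m : ℕ)

def IsCellSparse (S : Finset α) : Prop :=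
  ∀ j ≤ m, ∀ k, (S.filter (cell j · = k)).card ≤ b j

theorem exists_isCellSparse_subset_saturated (F : Finset α) :
    ∃ S ⊆ F, IsCellSparse cell b m S ∧
      ∀ p ∈ F, p ∉ S → ∃ j ≤ m, b j ≤ (S.filter (cell j · = cell j p)).card := by
  classical
  obtain ⟨S, hS, hmax⟩ := (F.powerset.filter (IsCellSparse cell b m)).exists_max_image
    Finset.card ⟨∅, by simp [IsCellSparse]⟩
  rw [Finset.mem_filter, Finset.mem_powerset] at hS
  refine ⟨S, hS.1, hS.2, fun p hpF hpS => ?_⟩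
  have hins : ¬ IsCellSparse cell b m (insert p S) := fun h => by
    have := hmax _ (Finset.mem_filter.2
      ⟨Finset.mem_powerset.2 (Finset.insert_subset hpF hS.1), h⟩)
    rw [Finset.card_insert_of_notMem hpS] at this
    omega
  simp only [IsCellSparse, not_forall, not_le] at hins
  obtain ⟨j, hj, k, hk⟩ := hins
  refine ⟨j, hj, ?_⟩
  rw [Finset.filter_insert] at hk
  split_ifs at hk with hpk
  · rw [hpk]
    have := Finset.card_insert_le p (S.filter (cell j · = k))
    omega
  · exact absurd (hS.2 j hj k) hk.not_ge

theorem card_sdiff_le_of_saturated [DecidableEq α]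
    (hnest : ∀ {j j'}, j ≤ j' → ∀ {y z}, cell j' y = cell j' z → cell j y = cell j z)
    {F S : Finset α} {A : ℝ} (hA : 0 ≤ A)
    (hF : ∀ j ≤ m, ∀ p ∈ F, ((F.filter (cell j · = cell j p)).card : ℝ) ≤ A * b j)
    (hsat : ∀ p ∈ F, p ∉ S → ∃ j ≤ m, b j ≤ (S.filter (cell j · = cell j p)).card) :
    ((F \ S).card : ℝ) ≤ A * S.card := by
  set Sat : ℕ → α → Prop := fun j p => j ≤ m ∧ b j ≤ (S.filter (cell j · = cell j p)).card
  -- each point of `F \ S` is charged to the coarsest saturated cell containing it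
  have hmin : ∀ p ∈ F \ S, ∃ j, Sat j p ∧ ∀ j', Sat j' p → j ≤ j' := fun p hp => by
    rw [Finset.mem_sdiff] at hp
    have h := hsat p hp.1 hp.2
    exact ⟨Nat.find h, Nat.find_spec h, fun _ => Nat.find_min' h⟩
  choose! g hgSat hgmin using hmin
  set Φ : α → ℕ × β := fun p => (g p, cell (g p) p)
  have hdisj : ∀ p ∈ F \ S, ∀ q ∈ F \ S, ∀ y,
      cell (g p) y = cell (g p) p → cell (g q) y = cell (g q) q → Φ p = Φ q := by
    intro p hp q hq y hyp hyq
    wlog hpq : g p ≤ g q generalizing p q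
    · exact (this q hq p hp hyq hyp (le_of_not_ge hpq)).symm
    -- the saturated cell of `p` also contains `q`, so `g q ≤ g p` by minimality
    have hqp : cell (g p) q = cell (g p) p := (hnest hpq hyq).symm.trans hyp
    have heq : g p = g q :=
      le_antisymm hpq (hgmin q hq _ (by simpa only [Sat, hqp] using hgSat p hp))
    exact Prod.ext heq (by simp only [Φ]; rw [← heq]; exact hqp.symm)
  set piece : ℕ × β → Finset α → Finset α := fun Q T => T.filter (cell Q.1 · = Q.2)
  set 𝒬 := (F \ S).image Φ
  have hpiece : ∀ Q ∈ 𝒬, ((piece Q F).card : ℝ) ≤ A * (piece Q S).card := by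
    simp only [𝒬, Finset.forall_mem_image]
    intro p hp
    calc ((piece (Φ p) F).card : ℝ) ≤ A * b (g p) :=
          hF _ (hgSat p hp).1 p (Finset.sdiff_subset hp)
      _ ≤ A * (piece (Φ p) S).card := by gcongr; exact_mod_cast (hgSat p hp).2
  have hpairwise : (𝒬 : Set (ℕ × β)).PairwiseDisjoint (piece · S) := by
    simp only [𝒬, Finset.coe_image]
    rintro _ ⟨p, hp, rfl⟩ _ ⟨q, hq, rfl⟩ hne
    refine Finset.disjoint_left.2 fun y hyp hyq => hne ?_
    exact hdisj p hp q hq y (Finset.mem_filter.1 hyp).2 (Finset.mem_filter.1 hyq).2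
  calc ((F \ S).card : ℝ) ≤ (𝒬.biUnion (piece · F)).card := by
        refine Nat.cast_le.2 (Finset.card_le_card fun p hp => Finset.mem_biUnion.2 ?_)
        exact ⟨Φ p, Finset.mem_image_of_mem Φ hp,
          Finset.mem_filter.2 ⟨Finset.sdiff_subset hp, rfl⟩⟩
    _ ≤ ∑ Q ∈ 𝒬, ((piece Q F).card : ℝ) := by exact_mod_cast Finset.card_biUnion_le
    _ ≤ ∑ Q ∈ 𝒬, A * (piece Q S).card := Finset.sum_le_sum hpiece
    _ = A * (𝒬.biUnion (piece · S)).card := by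
        rw [Finset.card_biUnion hpairwise, Nat.cast_sum, Finset.mul_sum]
    _ ≤ A * S.card := by
        gcongr
        exact Finset.biUnion_subset.2 fun Q _ => Finset.filter_subset _ _

end Cells

theorem exists_inv_two_pow_mem_Ico {ρ : ℝ} (hρ : 0 < ρ) (hρ1 : ρ ≤ 1) :
    ∃ j : ℕ, ρ ≤ (2 ^ j)⁻¹ ∧ (2 ^ j)⁻¹ < 2 * ρ := by
  obtain ⟨j, hj, hj'⟩ := exists_nat_pow_near (one_le_inv_iff₀.2 ⟨hρ, hρ1⟩) one_lt_two
  refine ⟨j, (le_inv_comm₀ hρ (by positivity)).2 hj, ?_⟩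
  rw [inv_lt_comm₀ (by positivity) (by positivity), mul_inv]
  rw [pow_succ] at hj'
  linarith

theorem div_rpow_le_rpow_sub_mul_div_rpow {δ x s t : ℝ} (hδ : 0 < δ) (hx : 0 < x)
    (hx1 : x ≤ 1) (hst : s ≤ t) : (x / δ) ^ t ≤ δ ^ (s - t) * (x / δ) ^ s := by
  calc (x / δ) ^ t = (x / δ) ^ s * (x / δ) ^ (t - s) := by
        rw [← Real.rpow_add (by positivity), add_sub_cancel]
    _ ≤ (x / δ) ^ s * δ⁻¹ ^ (t - s) := by
        gcongr
        rw [div_eq_mul_inv]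
        exact mul_le_of_le_one_left (inv_nonneg.2 hδ.le) hx1
    _ = δ ^ (s - t) * (x / δ) ^ s := by
        rw [Real.inv_rpow hδ.le, ← Real.rpow_neg hδ.le, neg_sub, mul_comm]

section Dyadic

variable {ι : Type*}

local notation "E" => EuclideanSpace ℝ ι

/-- `dyadicCell j y = k` means that `y` lies in the cube `∏ i, [k i / 2 ^ j, (k i + 1) / 2 ^ j)`. -/
noncomputable def dyadicCell (j : ℕ) (y : E) : ι → ℤ :=
  fun i => ⌊2 ^ j * y i⌋

theorem dyadicCell_eq_of_le {j j' : ℕ} (hjj' : j ≤ j') {y z : E}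
    (h : dyadicCell j' y = dyadicCell j' z) : dyadicCell j y = dyadicCell j z := by
  have key : ∀ x : ℝ, ⌊(2 : ℝ) ^ j * x⌋ = ⌊(2 : ℝ) ^ j' * x⌋ / (2 ^ (j' - j) : ℕ) := fun x => by
    rw [← Int.floor_div_natCast, Nat.cast_pow, Nat.cast_ofNat, ← Nat.sub_add_cancel hjj',
      pow_add, Nat.add_sub_cancel]
    field_simp
  funext i
  have hi := congrFun h i
  simp only [dyadicCell] at hi ⊢
  rw [key, key, hi]

theorem abs_sub_lt_of_dyadicCell_eq {j : ℕ} {y z : E} (h : dyadicCell j y = dyadicCell j z)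
    (i : ι) : |y i - z i| < (2 ^ j)⁻¹ := by
  have := Int.abs_sub_lt_one_of_floor_eq_floor (congrFun h i)
  rwa [← mul_sub, abs_mul, abs_of_pos (by positivity), ← lt_inv_mul_iff₀ (by positivity),
    mul_one] at this

variable [Fintype ι]

theorem dist_le_of_dyadicCell_eq {j : ℕ} {y z : E} (h : dyadicCell j y = dyadicCell j z) :
    dist y z ≤ √(Fintype.card ι) * (2 ^ j)⁻¹ := by
  rw [EuclideanSpace.dist_eq, ← Real.sqrt_sq (by positivity : (0 : ℝ) ≤ (2 ^ j)⁻¹),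
    ← Real.sqrt_mul (Nat.cast_nonneg _)]
  refine Real.sqrt_le_sqrt ?_
  calc ∑ i, dist (y i) (z i) ^ 2 ≤ ∑ _i : ι, ((2 : ℝ) ^ j)⁻¹ ^ 2 := by
        gcongr with i
        exact (abs_sub_lt_of_dyadicCell_eq h i).le
    _ = _ := by simp

theorem dyadicCell_mem_piFinset_of_mem_ball [DecidableEq ι] {j : ℕ} {r : ℝ}
    (hr : r ≤ (2 ^ j)⁻¹) {y z : E} (hy : y ∈ ball z r) :
    dyadicCell j y ∈
      Fintype.piFinset fun i => Finset.Icc (dyadicCell j z i - 1) (dyadicCell j z i + 1) := by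
  rw [Fintype.mem_piFinset]
  intro i
  have hyz : |2 ^ j * y i - 2 ^ j * z i| < 1 := by
    rw [← mul_sub, abs_mul, abs_of_pos (by positivity), ← lt_inv_mul_iff₀ (by positivity),
      mul_one]
    exact (PiLp.dist_apply_le y z i).trans_lt ((mem_ball.1 hy).trans_le hr)
  rw [abs_sub_lt_iff] at hyz
  have h₁ := Int.floor_mono (a := 2 ^ j * y i) (b := 2 ^ j * z i + 1) (by linarith)
  have h₂ := Int.floor_mono (a := 2 ^ j * z i) (b := 2 ^ j * y i + 1) (by linarith)
  rw [Int.floor_add_one] at h₁ h₂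
  simp only [dyadicCell, Finset.mem_Icc]
  omega

theorem IsCellSparse.ncard_inter_ball_le [DecidableEq ι] {b : ℕ → ℕ} {m j : ℕ} {S : Finset E}
    (hS : IsCellSparse dyadicCell b m S) (hj : j ≤ m) (z : E) {r : ℝ} (hr : r ≤ (2 ^ j)⁻¹) :
    ((S : Set E) ∩ ball z r).ncard ≤ 3 ^ Fintype.card ι * b j := by
  classical
  have hIcc : ∀ k : ℤ, (Finset.Icc (k - 1) (k + 1)).card = 3 := fun k => by
    rw [Int.card_Icc]; omega
  have hcoe : (S : Set E) ∩ ball z r = ↑(S.filter (· ∈ ball z r)) := by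
    ext; simp
  rw [hcoe, Set.ncard_coe_finset, mul_comm]
  calc _ ≤ b j * (Fintype.piFinset fun i =>
        Finset.Icc (dyadicCell j z i - 1) (dyadicCell j z i + 1)).card :=
      Finset.card_le_mul_card_image_of_maps_to
        (fun y hy => dyadicCell_mem_piFinset_of_mem_ball hr (Finset.mem_filter.1 hy).2) _
        fun k _ => (Finset.card_le_card
          (Finset.filter_subset_filter _ (Finset.filter_subset _ _))).trans (hS j hj k)
    _ = b j * 3 ^ Fintype.card ι := by simp [Fintype.card_piFinset, hIcc]

theorem IsKatzTaoSet.card_filter_dyadicCell_le {δ t C : ℝ} {F : Finset E}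
    (hF : IsKatzTaoSet δ t C (F : Set E)) (hδ : 0 < δ) (hC : 0 ≤ C)
    (htι : t ≤ Fintype.card ι) {j : ℕ} (hj : δ ≤ (2 ^ j)⁻¹) (p : E) :
    ((F.filter (dyadicCell j · = dyadicCell j p)).card : ℝ) ≤
      C * (1 + √(Fintype.card ι)) ^ Fintype.card ι * ((2 ^ j)⁻¹ / δ) ^ t := by
  set n := Fintype.card ι
  set ρ : ℝ := (1 + √n) * (2 ^ j)⁻¹
  have hsub : ↑(F.filter (dyadicCell j · = dyadicCell j p)) ⊆ (F : Set E) ∩ ball p ρ := by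
    intro y hy
    rw [Finset.coe_filter] at hy
    refine ⟨hy.1, mem_ball.2 ((dist_le_of_dyadicCell_eq hy.2).trans_lt ?_)⟩
    have : (0 : ℝ) < (2 ^ j)⁻¹ := by positivity
    linarith
  have hρ : δ ≤ ρ := hj.trans (le_mul_of_one_le_left (by positivity) (by simp))
  calc ((F.filter (dyadicCell j · = dyadicCell j p)).card : ℝ)
      ≤ ((F : Set E) ∩ ball p ρ).ncard := by
        rw [← Set.ncard_coe_finset]
        exact_mod_cast Set.ncard_le_ncard hsub (F.finite_toSet.inter_of_left _)
    _ ≤ C * (ρ / δ) ^ t := hF p ρ hρ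
    _ = C * (1 + √n) ^ t * ((2 ^ j)⁻¹ / δ) ^ t := by
        rw [mul_div_assoc, Real.mul_rpow (by positivity) (by positivity), mul_assoc]
    _ ≤ C * (1 + √n) ^ n * ((2 ^ j)⁻¹ / δ) ^ t := by
        gcongr
        rw [← Real.rpow_natCast]
        exact Real.rpow_le_rpow_of_exponent_le (by simp) htι

theorem IsCellSparse.isKatzTaoSet [DecidableEq ι] {δ s : ℝ} {m : ℕ} {S : Finset E}
    (hS : IsCellSparse dyadicCell (fun j => ⌈((2 ^ j)⁻¹ / δ) ^ s⌉₊) m S)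
    (hS₁ : (S : Set E) ⊆ ball 0 1) (hs : 0 ≤ s) (hsι : s ≤ Fintype.card ι)
    (hm : δ ≤ (2 ^ m)⁻¹) (hm' : (2 ^ m)⁻¹ < 2 * δ) :
    IsKatzTaoSet δ s (2 * 6 ^ Fintype.card ι) (S : Set E) := by
  set n := Fintype.card ι
  intro x r hr
  have hδ : 0 < δ := by linarith [(by positivity : (0 : ℝ) < (2 ^ m)⁻¹)]
  obtain ⟨z, ρ, hδρ, hρ1, hρr, hball⟩ : ∃ z ρ, δ ≤ ρ ∧ ρ ≤ 1 ∧ ρ ≤ r ∧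
      (S : Set E) ∩ ball x r ⊆ (S : Set E) ∩ ball z ρ := by
    rcases le_total r 1 with h | h
    · exact ⟨x, r, hr, h, le_rfl, subset_rfl⟩
    · exact ⟨0, 1, hm.trans (inv_le_one_of_one_le₀ (one_le_pow₀ one_le_two)), le_rfl, h,
        fun y hy => ⟨hy.1, hS₁ hy.1⟩⟩
  obtain ⟨j, hρj, hj2ρ⟩ := exists_inv_two_pow_mem_Ico (hδ.trans_le hδρ) hρ1
  have hjm : j ≤ m := by
    have : (2 : ℝ) ^ j < 2 ^ (m + 1) := by
      rw [← inv_lt_inv₀ (by positivity) (by positivity), pow_succ, mul_inv]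
      linarith
    exact Nat.lt_succ_iff.1 ((pow_lt_pow_iff_right₀ one_lt_two).1 this)
  have hrδ : 0 ≤ r / δ := div_nonneg (hδ.le.trans hr) hδ.le
  have hx1 : 1 ≤ ((2 ^ j)⁻¹ / δ) ^ s :=
    Real.one_le_rpow ((one_le_div hδ).2 (hδρ.trans hρj)) hs
  calc (((S : Set E) ∩ ball x r).ncard : ℝ) ≤ ((S : Set E) ∩ ball z ρ).ncard := by
        exact_mod_cast Set.ncard_le_ncard hball (S.finite_toSet.inter_of_left _)
    _ ≤ 3 ^ n * ⌈((2 ^ j)⁻¹ / δ) ^ s⌉₊ := by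
        exact_mod_cast hS.ncard_inter_ball_le hjm z hρj
    _ ≤ 3 ^ n * (2 * (2 * (r / δ)) ^ s) := by
        gcongr
        refine (Nat.ceil_le_two_mul (by linarith)).trans ?_
        gcongr
        rw [← mul_div_assoc]
        gcongr
        linarith
    _ = 2 * (3 ^ n * 2 ^ s) * (r / δ) ^ s := by
        rw [Real.mul_rpow zero_le_two hrδ]
        ring
    _ ≤ 2 * 6 ^ n * (r / δ) ^ s := by
        gcongr
        rw [show (6 : ℝ) = 3 * 2 by norm_num, mul_pow, ← Real.rpow_natCast 2]
        gcongr
        exact one_le_two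

theorem exists_subset_isKatzTaoSet_of_le_one {s t δ c C : ℝ} {F : Finset E}
    (hs : 0 ≤ s) (hst : s ≤ t) (htι : t ≤ Fintype.card ι) (hδ : 0 < δ) (hδ1 : δ ≤ 1)
    (hc : 0 < c) (hF₁ : (F : Set E) ⊆ ball 0 1) (hcard : c * δ ^ (-t) ≤ F.card)
    (hF : IsKatzTaoSet δ t C (F : Set E)) :
    ∃ S ⊆ F, (2 * (1 + √(Fintype.card ι)) ^ Fintype.card ι)⁻¹ * (c / C) * δ ^ (-s) ≤ S.card ∧
      IsKatzTaoSet δ s (2 * 6 ^ Fintype.card ι) (S : Set E) := by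
  classical
  set Λ := (1 + √(Fintype.card ι)) ^ Fintype.card ι
  obtain ⟨m, hm, hm'⟩ := exists_inv_two_pow_mem_Ico hδ hδ1
  obtain ⟨S, hSF, hS, hsat⟩ := exists_isCellSparse_subset_saturated dyadicCell
    (fun j => ⌈((2 ^ j)⁻¹ / δ) ^ s⌉₊) m F
  refine ⟨S, hSF, ?_, hS.isKatzTaoSet (subset_trans (by exact_mod_cast hSF) hF₁) hs
    (hst.trans htι) hm hm'⟩
  obtain ⟨p, hp⟩ : F.Nonempty :=
    Finset.card_pos.1 (by exact_mod_cast (by positivity : 0 < c * δ ^ (-t)).trans_le hcard)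
  have hC : 1 ≤ C := hF.one_le F.finite_toSet hδ hp
  have hΛ : 1 ≤ Λ := one_le_pow₀ (by simp)
  have hδst : 1 ≤ δ ^ (s - t) :=
    Real.one_le_rpow_of_pos_of_le_one_of_nonpos hδ hδ1 (by linarith)
  set A := C * Λ * δ ^ (s - t)
  have hA : 1 ≤ A :=
    one_le_mul_of_one_le_of_one_le (one_le_mul_of_one_le_of_one_le hC hΛ) hδst
  have hcells : ∀ j ≤ m, ∀ p ∈ F, ((F.filter (dyadicCell j · = dyadicCell j p)).card : ℝ) ≤
      A * ⌈((2 ^ j)⁻¹ / δ) ^ s⌉₊ := by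
    intro j hj p _
    have hjδ : δ ≤ (2 ^ j)⁻¹ :=
      hm.trans (inv_anti₀ (by positivity) (pow_le_pow_right₀ one_le_two hj))
    calc _ ≤ C * Λ * ((2 ^ j)⁻¹ / δ) ^ t :=
          hF.card_filter_dyadicCell_le hδ (by linarith) htι hjδ p
      _ ≤ C * Λ * (δ ^ (s - t) * ((2 ^ j)⁻¹ / δ) ^ s) := by
          gcongr
          exact div_rpow_le_rpow_sub_mul_div_rpow hδ (by positivity)
            (inv_le_one_of_one_le₀ (one_le_pow₀ one_le_two)) hst
      _ ≤ A * ⌈((2 ^ j)⁻¹ / δ) ^ s⌉₊ := by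
          rw [← mul_assoc]
          gcongr
          exact Nat.le_ceil _
  have hrejected := card_sdiff_le_of_saturated dyadicCell _ m (dyadicCell_eq_of_le ·)
    (by linarith) hcells hsat
  have hFS : (F.card : ℝ) ≤ 2 * A * S.card := by
    have hsplit : (F.card : ℝ) = (F \ S).card + S.card := by
      exact_mod_cast (Finset.card_sdiff_add_card_eq_card hSF).symm
    have := le_mul_of_one_le_left (Nat.cast_nonneg S.card) hA
    linarith
  rw [show δ ^ (-t) = δ ^ (s - t) * δ ^ (-s) by rw [← Real.rpow_add hδ]; ring_nf] at hcard
  have hscaled : δ ^ (s - t) * (c * δ ^ (-s)) ≤ δ ^ (s - t) * (S.card * (2 * Λ * C)) := by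
    simp only [A] at hFS
    linarith
  have hC0 : 0 < C := by linarith
  calc (2 * Λ)⁻¹ * (c / C) * δ ^ (-s) = c * δ ^ (-s) / (2 * Λ * C) := by field_simp
    _ ≤ S.card := by
        rw [div_le_iff₀ (by positivity)]
        exact le_of_mul_le_mul_left hscaled (by positivity)

end Dyadic

/-- For every `d` there are constants `κ_d > 0` and `K_d` such that:
if `0 ≤ s ≤ t ≤ d`, `δ > 0`, and `P₀ ⊆ B(0,1) ⊆ ℝ^d` is a δ-separated set with
`|P₀| ≥ c δ^{−t}` and `|P₀ ∩ B(x,r)| ≤ C (r/δ)^t` for all `x` and `r ≥ δ`, where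
`0 < c < C < ∞`, then there is `P ⊆ P₀` with `|P| ≥ κ_d (c/C) δ^{−s}` and
`|P ∩ B(x,r)| ≤ K_d (r/δ)^s` for all `x` and `r ≥ δ`. -/
theorem stmt_2 (d : ℕ) :
    ∃ κ K : ℝ, 0 < κ ∧ 0 < K ∧
      ∀ (s t δ c C : ℝ) (P₀ : Set (EuclideanSpace ℝ (Fin d))),
        0 ≤ s → s ≤ t → t ≤ d → 0 < δ → 0 < c → c < C →
        P₀ ⊆ Metric.ball 0 1 → P₀.Finite → IsSeparated' δ P₀ →
        c * δ ^ (-t) ≤ P₀.ncard →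
        (∀ (x : EuclideanSpace ℝ (Fin d)) (r : ℝ), δ ≤ r →
          ((P₀ ∩ Metric.ball x r).ncard : ℝ) ≤ C * (r / δ) ^ t) →
        ∃ P ⊆ P₀, κ * (c / C) * δ ^ (-s) ≤ P.ncard ∧
          ∀ (x : EuclideanSpace ℝ (Fin d)) (r : ℝ), δ ≤ r →
            ((P ∩ Metric.ball x r).ncard : ℝ) ≤ K * (r / δ) ^ s := by
  have hκ : 1 ≤ 2 * (1 + √d) ^ d :=
    one_le_mul_of_one_le_of_one_le one_le_two (one_le_pow₀ (by simp))
  have hK : 1 ≤ 2 * (6 : ℝ) ^ d :=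
    one_le_mul_of_one_le_of_one_le one_le_two (one_le_pow₀ (by norm_num))
  refine ⟨(2 * (1 + √d) ^ d)⁻¹, 2 * 6 ^ d, by positivity, by positivity, ?_⟩
  intro s t δ c C P₀ hs hst htd hδ hc hcC hP₀ hfin _ hcard hreg
  obtain ⟨F, rfl⟩ := hfin.exists_finset_coe
  rw [Set.ncard_coe_finset] at hcard
  rcases le_or_gt δ 1 with hδ1 | hδ1
  · obtain ⟨S, hSF, hS, hSreg⟩ := exists_subset_isKatzTaoSet_of_le_one hs hst
      (by simpa using htd) hδ hδ1 hc hP₀ hcard hreg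
    simp only [Fintype.card_fin] at hS hSreg
    exact ⟨S, by exact_mod_cast hSF, by rwa [Set.ncard_coe_finset], hSreg⟩
  · obtain ⟨p, hp⟩ : F.Nonempty :=
      Finset.card_pos.1 (by exact_mod_cast (by positivity : 0 < c * δ ^ (-t)).trans_le hcard)
    refine ⟨{p}, by simpa using hp, ?_, isKatzTaoSet_singleton hδ hs hK p⟩
    rw [Set.ncard_singleton, Nat.cast_one]
    exact mul_le_one₀ (mul_le_one₀ (inv_le_one_of_one_le₀ hκ) (div_nonneg hc.le (by linarith))
      (div_le_one_of_le₀ hcC.le (by linarith))) (by positivity)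
      (Real.rpow_le_one_of_one_le_of_nonpos hδ1.le (by linarith))
end

section
/- Let a > 0, s ≥ 1, ε > 0, A ≥ 1, 0 < δ < 1, and let P ⊆ B(0,1) ⊆ ℝ² be a δ-separated set such that |P ∩ B(x,r)| ≤ A δ^{−ε} (r/δ)^s for all x ∈ ℝ² and r ≥ δ, with |P| ≥ a δ^{ε−s}. Then there exists a δ-separated subset P' ⊆ P with |P'| ≥ κ (a/A) δ^{2ε−1} and |P' ∩ B(x,r)| ≤ K (r/δ) for all x ∈ ℝ² and r ≥ δ, where κ > 0 and K < ∞ are absolute constants. -/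
open Metric Set

/-!
Dyadic pruning. Tile the plane by cubes of side `δ/2 · 2^k`, `0 ≤ k ≤ D`, where
`δ 2^D ≤ 1 < δ 2^(D+1)`, and put `β = δ^(ε+s-1)/A`. A cube of level `0` holds at most one point
of `P`, and the Frostman hypothesis at radius `δ 2^k` gives `β |P ∩ Q| ≤ 2^k` for every cube `Q`
of level `k`. Going up the levels, keep at most `2^k` points in each cube of level `k`; since both
the points kept in the children of `Q` and the capacity `2^k` are at least `β |P ∩ Q|`, every cube
keeps a `β`-fraction of its points, so `|P'| ≥ β |P| ≥ (a/A) δ^(2ε-1)`. A ball of radius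
`r ≈ δ 2^k` meets at most `10^2` cubes of level `k`, each holding at most `2^k ≲ r/δ` points
of `P'`.
-/

open Finset

section Pruning

variable {X ι : Type*} [DecidableEq ι]

lemma mul_card_le_card_of_forall_fiber (f : X → ι) {β : ℝ} {F S : Finset X}
    (h : ∀ z, β * #{x ∈ F | f x = z} ≤ #{x ∈ S | f x = z}) : β * #F ≤ #S := by
  classical
  have hF : Set.MapsTo f F ((F ∪ S).image f) := fun x hx =>
    mem_image_of_mem f (mem_union_left _ hx)
  have hS : Set.MapsTo f S ((F ∪ S).image f) := fun x hx =>
    mem_image_of_mem f (mem_union_right _ hx)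
  rw [card_eq_sum_card_fiberwise hF, card_eq_sum_card_fiberwise hS]
  push_cast
  rw [mul_sum]
  exact sum_le_sum fun z _ => h z

lemma mul_card_fiber_comp_le {κ : Type*} [DecidableEq κ] (f : X → ι) (g : ι → κ) {β : ℝ}
    {F S : Finset X} (h : ∀ w, β * #{x ∈ F | f x = w} ≤ #{x ∈ S | f x = w}) (z : κ) :
    β * #{x ∈ F | g (f x) = z} ≤ #{x ∈ S | g (f x) = z} := by
  refine mul_card_le_card_of_forall_fiber f fun w => ?_
  simp only [filter_filter]
  by_cases hw : g w = z
  · have (U : Finset X) : {x ∈ U | g (f x) = z ∧ f x = w} = {x ∈ U | f x = w} :=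
      filter_congr fun x _ => by grind
    rw [this, this]
    exact h w
  · simp [show ∀ x, ¬(g (f x) = z ∧ f x = w) by grind]

lemma exists_subset_card_fiber_eq_min (S : Finset X) (f : X → ι) (m : ℕ) :
    ∃ T ⊆ S, ∀ z, #{x ∈ T | f x = z} = min #{x ∈ S | f x = z} m := by
  choose U hUS hU using fun z => exists_subset_card_eq (min_le_left #{x ∈ S | f x = z} m)
  classical
  refine ⟨S.filter fun x => x ∈ U (f x), filter_subset _ _, fun z => ?_⟩
  rw [← hU z, filter_filter]
  congr 1
  ext x
  have := @hUS z x
  grind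

theorem exists_subset_multiscale_card_fiber_le (F : Finset X) (c : ℕ → X → ι) (π : ι → ι)
    (cap : ℕ → ℕ) {β : ℝ} (hβ : β ≤ 1) (D : ℕ) (hc : ∀ d < D, ∀ x, c (d + 1) x = π (c d x))
    (hcap₀ : ∀ z, #{x ∈ F | c 0 x = z} ≤ cap 0)
    (hcap : ∀ d < D, ∀ z, β * #{x ∈ F | c (d + 1) x = z} ≤ cap (d + 1)) :
    ∃ S ⊆ F, (∀ d ≤ D, ∀ z, #{x ∈ S | c d x = z} ≤ cap d) ∧
      ∀ z, β * #{x ∈ F | c D x = z} ≤ #{x ∈ S | c D x = z} := by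
  induction D with
  | zero =>
    refine ⟨F, Finset.Subset.rfl, fun d hd => ?_, fun z => ?_⟩
    · obtain rfl := Nat.le_zero.1 hd
      exact hcap₀
    · exact mul_le_of_le_one_left (Nat.cast_nonneg _) hβ
  | succ D ih =>
    obtain ⟨S, hSF, hSup, hSlow⟩ :=
      ih (fun d hd => hc d (by omega)) (fun d hd => hcap d (by omega))
    obtain ⟨T, hTS, hT⟩ := exists_subset_card_fiber_eq_min S (c (D + 1)) (cap (D + 1))
    have hfiber (U : Finset X) (z : ι) :
        {x ∈ U | c (D + 1) x = z} = {x ∈ U | π (c D x) = z} :=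
      filter_congr fun x _ => by rw [hc D (by omega)]
    refine ⟨T, hTS.trans hSF, fun d hd => ?_, fun z => ?_⟩
    · obtain hd | rfl := Nat.le_succ_iff.1 hd
      · exact fun z => (Finset.card_le_card (filter_subset_filter _ hTS)).trans (hSup d hd z)
      · exact fun z => (hT z).trans_le (min_le_right _ _)
    · rw [hT z, Nat.cast_min, le_min_iff]
      refine ⟨?_, hcap D (by omega) z⟩
      rw [hfiber, hfiber]
      exact mul_card_fiber_comp_le (c D) π hSlow z

end Pruning

lemma card_Icc_floor_div_le {ℓ : ℝ} (hℓ : 0 < ℓ) (a : ℝ) {r : ℝ} (hr : 0 ≤ r) :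
    (#(Icc ⌊(a - r) / ℓ⌋ ⌊(a + r) / ℓ⌋) : ℝ) ≤ 2 * r / ℓ + 2 := by
  have hb := Int.lt_floor_add_one ((a - r) / ℓ)
  have hc := Int.floor_le ((a + r) / ℓ)
  have hsum : (a + r) / ℓ - (a - r) / ℓ = 2 * r / ℓ := by ring
  rw [Int.card_Icc, ← Int.cast_natCast, Int.toNat_eq_max, Int.cast_max]
  push_cast
  exact max_le (by linarith) (by positivity)

section Cubes

variable {d : ℕ}

/-- `cubeIndex ℓ x = z` iff `x` lies in the half-open cube `∏ i, [z i * ℓ, (z i + 1) * ℓ)`. -/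
noncomputable def cubeIndex (ℓ : ℝ) (x : EuclideanSpace ℝ (Fin d)) : Fin d → ℤ :=
  fun i => ⌊x i / ℓ⌋

lemma cubeIndex_two_mul (ℓ : ℝ) (x : EuclideanSpace ℝ (Fin d)) :
    cubeIndex (2 * ℓ) x = fun i => cubeIndex ℓ x i / 2 := by
  funext i
  have := Int.floor_div_natCast (x i / ℓ) 2
  push_cast at this
  rw [cubeIndex, cubeIndex, ← this, div_div, mul_comm]

lemma dist_lt_of_cubeIndex_eq [NeZero d] {ℓ : ℝ} (hℓ : 0 < ℓ) {x y : EuclideanSpace ℝ (Fin d)}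
    (h : cubeIndex ℓ x = cubeIndex ℓ y) : dist x y < √d * ℓ := by
  have hcoord (i : Fin d) : dist (x i) (y i) ^ 2 < ℓ ^ 2 := by
    have := Int.abs_sub_lt_one_of_floor_eq_floor (congrFun h i)
    rw [← sub_div, abs_div, abs_of_pos hℓ, div_lt_one hℓ, ← Real.dist_eq] at this
    exact pow_lt_pow_left₀ this dist_nonneg two_ne_zero
  rw [EuclideanSpace.dist_eq, ← Real.sqrt_sq hℓ.le, ← Real.sqrt_mul (Nat.cast_nonneg d)]
  refine Real.sqrt_lt_sqrt (by positivity) ?_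
  calc ∑ i, dist (x i) (y i) ^ 2 < ∑ _i : Fin d, ℓ ^ 2 :=
        sum_lt_sum_of_nonempty univ_nonempty fun i _ => hcoord i
    _ = d * ℓ ^ 2 := by simp

lemma card_cubeIndex_fiber_le_one [NeZero d] {ℓ δ : ℝ} (hℓ : 0 < ℓ) (hδ : √d * ℓ ≤ δ)
    {F : Finset (EuclideanSpace ℝ (Fin d))}
    (hF : IsSeparated' δ (↑F : Set (EuclideanSpace ℝ (Fin d)))) (z : Fin d → ℤ) :
    #{x ∈ F | cubeIndex ℓ x = z} ≤ 1 := by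
  refine card_le_one.2 fun x hx y hy => by_contra fun hxy => ?_
  rw [mem_filter] at hx hy
  have := dist_lt_of_cubeIndex_eq hℓ (hx.2.trans hy.2.symm)
  linarith [hF x hx.1 y hy.1 hxy]

lemma exists_card_cubeIndex_fiber_le_ncard [NeZero d] {P : Set (EuclideanSpace ℝ (Fin d))}
    (hP : P.Finite) {F : Finset (EuclideanSpace ℝ (Fin d))} (hF : (F : Set _) ⊆ P) {ℓ r : ℝ}
    (hℓ : 0 < ℓ) (hr : √d * ℓ ≤ r) (z : Fin d → ℤ) :
    ∃ p, #{x ∈ F | cubeIndex ℓ x = z} ≤ (P ∩ ball p r).ncard := by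
  obtain ⟨p, hp⟩ | hempty := Finset.eq_empty_or_nonempty {x ∈ F | cubeIndex ℓ x = z} |>.symm
  · refine ⟨p, ?_⟩
    rw [← ncard_coe_finset]
    refine ncard_le_ncard (fun x hx => ?_) (hP.inter_of_left _)
    simp only [mem_coe, mem_filter] at hx hp
    exact ⟨hF hx.1, (dist_lt_of_cubeIndex_eq hℓ (hx.2.trans hp.2.symm)).trans_le hr⟩
  · exact ⟨0, by simp [hempty]⟩

lemma card_filter_mem_ball_le {ℓ : ℝ} (hℓ : 0 < ℓ) {S : Finset (EuclideanSpace ℝ (Fin d))}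
    {m : ℕ} (hS : ∀ z, #{y ∈ S | cubeIndex ℓ y = z} ≤ m) (x : EuclideanSpace ℝ (Fin d))
    {r : ℝ} (hr : 0 ≤ r) : ((↑S ∩ ball x r).ncard : ℝ) ≤ (2 * r / ℓ + 2) ^ d * m := by
  classical
  set s := {y ∈ S | y ∈ ball x r}
  have hs : ↑S ∩ ball x r = (↑s : Set (EuclideanSpace ℝ (Fin d))) := by ext; simp [s]
  rw [hs, ncard_coe_finset]
  have hfiber (z : Fin d → ℤ) : #{y ∈ s | cubeIndex ℓ y = z} ≤ m :=
    (Finset.card_le_card (filter_subset_filter _ (filter_subset _ _))).trans (hS z)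
  have himage : s.image (cubeIndex ℓ) ⊆
      Fintype.piFinset fun i => Icc ⌊(x i - r) / ℓ⌋ ⌊(x i + r) / ℓ⌋ := by
    intro z hz
    obtain ⟨y, hy, rfl⟩ := mem_image.1 hz
    rw [Fintype.mem_piFinset]
    intro i
    have hyx := (PiLp.dist_apply_le y x i).trans_lt (mem_ball.1 (mem_filter.1 hy).2)
    rw [Real.dist_eq, abs_lt] at hyx
    exact mem_Icc.2 ⟨Int.floor_le_floor (by gcongr; linarith),
      Int.floor_le_floor (by gcongr; linarith)⟩
  have hcubes : (#(s.image (cubeIndex ℓ)) : ℝ) ≤ (2 * r / ℓ + 2) ^ d := by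
    calc (#(s.image (cubeIndex ℓ)) : ℝ)
        ≤ ∏ i, (#(Icc ⌊(x i - r) / ℓ⌋ ⌊(x i + r) / ℓ⌋) : ℝ) := by
          exact_mod_cast (Finset.card_le_card himage).trans_eq (Fintype.card_piFinset _)
      _ ≤ ∏ _i : Fin d, (2 * r / ℓ + 2) :=
          prod_le_prod (fun _ _ => Nat.cast_nonneg _) fun i _ => card_Icc_floor_div_le hℓ _ hr
      _ = (2 * r / ℓ + 2) ^ d := by simp
  calc (#s : ℝ) ≤ m * #(s.image (cubeIndex ℓ)) := by
        exact_mod_cast card_le_mul_card_image s m fun z _ => hfiber z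
    _ ≤ (2 * r / ℓ + 2) ^ d * m := by
        rw [mul_comm]; gcongr

lemma ncard_inter_ball_le_of_le_four_mul {ℓ : ℝ} (hℓ : 0 < ℓ)
    {S : Finset (EuclideanSpace ℝ (Fin d))} {m : ℕ} (hS : ∀ z, #{y ∈ S | cubeIndex ℓ y = z} ≤ m)
    (x : EuclideanSpace ℝ (Fin d)) {r : ℝ} (hr₀ : 0 ≤ r) (hr : r ≤ 4 * ℓ) :
    ((↑S ∩ ball x r).ncard : ℝ) ≤ 10 ^ d * m := by
  have h8 : 2 * r / ℓ ≤ 8 := (div_le_iff₀ hℓ).2 (by linarith)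
  calc ((↑S ∩ ball x r).ncard : ℝ) ≤ (2 * r / ℓ + 2) ^ d * m :=
        card_filter_mem_ball_le hℓ hS x hr₀
    _ ≤ 10 ^ d * m := by gcongr; linarith

theorem ncard_inter_ball_le_of_multiscale {S : Finset (EuclideanSpace ℝ (Fin d))}
    (hS : (↑S : Set (EuclideanSpace ℝ (Fin d))) ⊆ ball 0 1) {ℓ₀ : ℝ} (hℓ₀ : 0 < ℓ₀) {D : ℕ}
    (hD : 1 ≤ 4 * (ℓ₀ * 2 ^ D))
    (hup : ∀ k ≤ D, ∀ z, #{x ∈ S | cubeIndex (ℓ₀ * 2 ^ k) x = z} ≤ 2 ^ k)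
    (x : EuclideanSpace ℝ (Fin d)) {r : ℝ} (hr : ℓ₀ ≤ r) :
    ((↑S ∩ ball x r).ncard : ℝ) ≤ 10 ^ d * (r / ℓ₀) := by
  obtain ⟨k, hk, hk'⟩ := exists_nat_pow_near ((one_le_div hℓ₀).2 hr) one_lt_two
  rw [le_div_iff₀ hℓ₀, mul_comm] at hk
  rw [div_lt_iff₀ hℓ₀, pow_succ, mul_comm] at hk'
  rcases le_or_gt k D with hkD | hDk
  · calc ((↑S ∩ ball x r).ncard : ℝ) ≤ 10 ^ d * (2 ^ k : ℕ) :=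
          ncard_inter_ball_le_of_le_four_mul (by positivity) (hup k hkD) x (by linarith)
            (by linarith)
      _ ≤ 10 ^ d * (r / ℓ₀) := by
          push_cast; gcongr; rw [le_div_iff₀ hℓ₀]; linarith
  · have h2D : ℓ₀ * 2 ^ D ≤ r :=
      le_trans (mul_le_mul_of_nonneg_left (pow_le_pow_right₀ one_le_two hDk.le) hℓ₀.le) hk
    calc ((↑S ∩ ball x r).ncard : ℝ)
        ≤ ((↑S ∩ ball (0 : EuclideanSpace ℝ (Fin d)) 1).ncard : ℝ) := by
          rw [inter_eq_left.2 hS]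
          exact_mod_cast ncard_le_ncard inter_subset_left S.finite_toSet
      _ ≤ 10 ^ d * (2 ^ D : ℕ) :=
          ncard_inter_ball_le_of_le_four_mul (ℓ := ℓ₀ * 2 ^ D) (by positivity) (hup D le_rfl) 0
            zero_le_one hD
      _ ≤ 10 ^ d * (r / ℓ₀) := by
          push_cast; gcongr; rw [le_div_iff₀ hℓ₀]; linarith

end Cubes

lemma weight_mul_frostman_bound_le {δ A s ε t : ℝ} (hδ : 0 < δ) (hA : 0 < A) (hs : 1 ≤ s)
    (ht : 0 < t) (hδt : δ * t ≤ 1) : δ ^ (ε + s - 1) / A * (A * δ ^ (-ε) * t ^ s) ≤ t := by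
  have hδpow : δ ^ (ε + s - 1) * δ ^ (-ε) = δ ^ (s - 1) := by
    rw [← Real.rpow_add hδ]; ring_nf
  have htpow : t ^ s = t ^ (s - 1) * t := by
    rw [← Real.rpow_add_one ht.ne']; ring_nf
  calc δ ^ (ε + s - 1) / A * (A * δ ^ (-ε) * t ^ s) = (δ * t) ^ (s - 1) * t := by
        rw [Real.mul_rpow hδ.le ht.le, htpow, ← hδpow]; field_simp
    _ ≤ t := mul_le_of_le_one_left ht.le (Real.rpow_le_one (by positivity) hδt (by linarith))

lemma sqrt_two_mul_half_le {t : ℝ} (ht : 0 ≤ t) : √2 * (t / 2) ≤ t := by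
  have : √(2 : ℝ) ≤ 2 := Real.sqrt_le_iff.2 ⟨by norm_num, by norm_num⟩
  nlinarith

lemma weight_mul_card_cubeIndex_fiber_le {P : Set (EuclideanSpace ℝ (Fin 2))} (hP : P.Finite)
    {δ A s ε : ℝ} (hδ : 0 < δ) (hA : 0 < A) (hs : 1 ≤ s)
    (hcnt : ∀ (x : EuclideanSpace ℝ (Fin 2)) (r : ℝ), δ ≤ r →
      ((P ∩ ball x r).ncard : ℝ) ≤ A * δ ^ (-ε) * (r / δ) ^ s)
    {F : Finset (EuclideanSpace ℝ (Fin 2))} (hF : ↑F ⊆ P) {k : ℕ} (hk : δ * 2 ^ k ≤ 1)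
    (z : Fin 2 → ℤ) :
    δ ^ (ε + s - 1) / A * #{x ∈ F | cubeIndex (δ / 2 * 2 ^ k) x = z} ≤ 2 ^ k := by
  have hsqrt : √((2 : ℕ) : ℝ) * (δ / 2 * 2 ^ k) ≤ δ * 2 ^ k := by
    have := sqrt_two_mul_half_le (t := δ * 2 ^ k) (by positivity)
    push_cast
    linarith
  obtain ⟨p, hp⟩ := exists_card_cubeIndex_fiber_le_ncard hP hF (by positivity) hsqrt z
  have hr : δ ≤ δ * 2 ^ k := le_mul_of_one_le_right hδ.le (one_le_pow₀ one_le_two)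
  calc δ ^ (ε + s - 1) / A * #{x ∈ F | cubeIndex (δ / 2 * 2 ^ k) x = z}
      ≤ δ ^ (ε + s - 1) / A * (A * δ ^ (-ε) * (δ * 2 ^ k / δ) ^ s) := by
        gcongr
        exact (Nat.cast_le.2 hp).trans (hcnt p _ hr)
    _ ≤ 2 ^ k := by
        rw [mul_div_cancel_left₀ _ hδ.ne']
        exact weight_mul_frostman_bound_le hδ hA hs (by positivity) hk

lemma exists_mul_two_pow_le_one_lt {δ : ℝ} (hδ₀ : 0 < δ) (hδ₁ : δ ≤ 1) :
    ∃ D : ℕ, δ * 2 ^ D ≤ 1 ∧ 1 < δ * 2 ^ (D + 1) := by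
  obtain ⟨D, hD, hD'⟩ := exists_nat_pow_near (one_le_inv₀ hδ₀ |>.2 hδ₁) (one_lt_two (α := ℝ))
  rw [le_inv_comm₀ (by positivity) hδ₀, ← one_div, le_div_iff₀ (by positivity)] at hD
  rw [inv_lt_iff_one_lt_mul₀ hδ₀, mul_comm] at hD'
  exact ⟨D, hD, hD'⟩

/-- There are absolute constants `κ > 0` and `K < ∞` such that: if `a > 0`, `s ≥ 1`,
`ε > 0`, `A ≥ 1`, `0 < δ < 1`, and `P ⊆ B(0,1) ⊆ ℝ²` is δ-separated with
`|P ∩ B(x,r)| ≤ A δ^{−ε} (r/δ)^s` for all `x` and `r ≥ δ`, and `|P| ≥ a δ^{ε−s}`,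
then there is a δ-separated `P' ⊆ P` with `|P'| ≥ κ (a/A) δ^{2ε−1}` and
`|P' ∩ B(x,r)| ≤ K (r/δ)` for all `x` and `r ≥ δ`. -/
theorem stmt_3 :
    ∃ κ K : ℝ, 0 < κ ∧ 0 < K ∧
      ∀ (a s ε A δ : ℝ) (P : Set (EuclideanSpace ℝ (Fin 2))),
        0 < a → 1 ≤ s → 0 < ε → 1 ≤ A → 0 < δ → δ < 1 →
        P ⊆ Metric.ball 0 1 → P.Finite → IsSeparated' δ P →
        (∀ (x : EuclideanSpace ℝ (Fin 2)) (r : ℝ), δ ≤ r →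
          ((P ∩ Metric.ball x r).ncard : ℝ) ≤ A * δ ^ (-ε) * (r / δ) ^ s) →
        a * δ ^ (ε - s) ≤ P.ncard →
        ∃ P' ⊆ P, IsSeparated' δ P' ∧ κ * (a / A) * δ ^ (2 * ε - 1) ≤ P'.ncard ∧
          ∀ (x : EuclideanSpace ℝ (Fin 2)) (r : ℝ), δ ≤ r →
            ((P' ∩ Metric.ball x r).ncard : ℝ) ≤ K * (r / δ) := by
  refine ⟨1, 200, one_pos, by norm_num, ?_⟩
  intro a s ε A δ P _ hs _ hA hδ0 hδ1 hPball hPfin hPsep hcnt hcard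
  obtain ⟨D, hD, hD'⟩ := exists_mul_two_pow_le_one_lt hδ0 hδ1.le
  set F := hPfin.toFinset
  have hFP : (↑F : Set _) = P := hPfin.coe_toFinset
  have hβ : δ ^ (ε + s - 1) / A ≤ 1 :=
    div_le_one_of_le₀ ((Real.rpow_le_one hδ0.le hδ1.le (by linarith)).trans hA) (by linarith)
  obtain ⟨S, hSF, hSup, hSlow⟩ := exists_subset_multiscale_card_fiber_le F
    (fun k => cubeIndex (δ / 2 * 2 ^ k)) (fun z i => z i / 2) (2 ^ ·) hβ D
    (fun k _ x => by rw [pow_succ, ← mul_assoc, mul_comm _ (2 : ℝ), cubeIndex_two_mul])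
    (card_cubeIndex_fiber_le_one (by positivity) (by simpa using sqrt_two_mul_half_le hδ0.le)
      (by rwa [hFP]))
    (fun k hk z => by
      push_cast
      exact weight_mul_card_cubeIndex_fiber_le hPfin hδ0 (by linarith) hs hcnt hFP.le
        ((mul_le_mul_of_nonneg_left (pow_le_pow_right₀ one_le_two hk) hδ0.le).trans hD) z)
  have hSP : (↑S : Set _) ⊆ P := hFP ▸ coe_subset.2 hSF
  refine ⟨S, hSP, fun p hp q hq => hPsep p (hSP hp) q (hSP hq), ?_, fun x r hr => ?_⟩
  · rw [ncard_coe_finset]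
    rw [ncard_eq_toFinset_card P hPfin] at hcard
    calc 1 * (a / A) * δ ^ (2 * ε - 1) = δ ^ (ε + s - 1) / A * (a * δ ^ (ε - s)) := by
          rw [show 2 * ε - 1 = ε + s - 1 + (ε - s) by ring, Real.rpow_add hδ0]; ring
      _ ≤ δ ^ (ε + s - 1) / A * #F := by gcongr
      _ ≤ #S := mul_card_le_card_of_forall_fiber _ hSlow
  · have := ncard_inter_ball_le_of_multiscale (hSP.trans hPball) (by positivity : 0 < δ / 2)
      (by rw [pow_succ, ← mul_assoc] at hD'; linarith) hSup x (r := r) (by linarith)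
    calc _ ≤ 10 ^ 2 * (r / (δ / 2)) := this
      _ = 200 * (r / δ) := by field_simp; ring
end

section
/- Let F ⊆ [0,1]² be a self-similar set that is not contained in any line, and suppose the group generated by the orthogonal parts of its defining similarities is discrete (finite). Then F contains a self-similar set E which is the attractor of an IFS of three similarities of ℝ², all with the same contraction ratio, all with trivial orthogonal part (no rotation or reflection), and whose three fixed points are not collinear. -/
/-!
Since the group generated by the orthogonal parts is finite, each of its elements is a positive
word in the generators, so any word `w` can be followed by a word `l` cancelling its orthogonal
part. Taking `w` long, `S_{w ++ l}` maps `F` into a small ball around a prescribed point of `F`.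
Choose such words `u₀, u₁, u₂` for three affinely independent points of `F`; each `u_j`
followed by the two others gives maps with a common ratio `r` and trivial linear part, i.e.
homotheties `x ↦ r • x + W_j` mapping `F` into itself. Their fixed points lie in `F`, hence in
`S_{u_j} F`, hence near the chosen points, so they are still affinely independent; the attractor
of the three homotheties inside `F` is the required set.
-/

open Metric Set Filter Topology Function

namespace Matrix.orthogonalGroup

variable (n : Type*) [Fintype n] [DecidableEq n]

noncomputable def toLinearIsometryEquiv :
    orthogonalGroup n ℝ →* (EuclideanSpace ℝ n ≃ₗᵢ[ℝ] EuclideanSpace ℝ n) where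
  toFun U := Unitary.linearIsometryEquiv
    ⟨toEuclideanCLM (n := n) (𝕜 := ℝ) U, Unitary.map_mem _ U.2⟩
  map_one' := by
    ext x : 1
    exact congr($(map_one (toEuclideanCLM (n := n) (𝕜 := ℝ))) x)
  map_mul' U V := by
    ext x : 1
    exact congr($(map_mul (toEuclideanCLM (n := n) (𝕜 := ℝ)) (U : Matrix n n ℝ) V) x)

theorem toLinearIsometryEquiv_apply (U : orthogonalGroup n ℝ) (x : EuclideanSpace ℝ n) :
    toLinearIsometryEquiv n U x = WithLp.toLp 2 ((U : Matrix n n ℝ) *ᵥ x) :=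
  rfl

end Matrix.orthogonalGroup

theorem Subgroup.exists_list_map_prod_eq_of_mem_closure {ι G : Type*} [Group G] {L : ι → G}
    (hfin : (closure (range L) : Set G).Finite) {g : G} (hg : g ∈ closure (range L)) :
    ∃ w : List ι, (w.map L).prod = g := by
  have : Finite (closure (range L)) := hfin.to_subtype
  have hfinOrder : ∀ x ∈ range L, IsOfFinOrder x := fun x hx =>
    (closure (range L)).subtype.isOfFinOrder
      (isOfFinOrder_of_finite (⟨x, subset_closure hx⟩ : closure (range L)))
  rw [← mem_toSubmonoid, closure_toSubmonoid_of_isOfFinOrder hfinOrder,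
    ← FreeMonoid.mrange_lift] at hg
  obtain ⟨l, rfl⟩ := hg
  exact ⟨l.toList, (FreeMonoid.lift_apply L l).symm⟩

theorem exists_affineIndependent_of_not_collinear {k V P : Type*} [DivisionRing k]
    [AddCommGroup V] [Module k V] [AddTorsor V P] {s : Set P} (h : ¬Collinear k s) :
    ∃ p : Fin 3 → P, (∀ j, p j ∈ s) ∧ AffineIndependent k p := by
  by_contra! hcol
  apply h
  obtain rfl | ⟨p₀, hp₀⟩ := s.eq_empty_or_nonempty
  · exact collinear_empty k P
  by_cases hs : s ⊆ {p₀}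
  · exact (collinear_singleton k p₀).subset hs
  obtain ⟨p₁, hp₁, hne⟩ := not_subset.1 hs
  have hline : s ⊆ line[k, p₀, p₁] := fun p hp => by
    by_contra hp'
    refine hcol ![p₀, p₁, p] (by simp [Fin.forall_fin_succ, hp₀, hp₁, hp]) ?_
    exact affineIndependent_of_ne_of_mem_of_mem_of_notMem (Ne.symm hne)
      (left_mem_affineSpan_pair k p₀ p₁) (right_mem_affineSpan_pair k p₀ p₁) hp'
  refine Collinear.subset hline ?_
  rw [Collinear, ← AffineSubspace.direction_eq_vectorSpan, direction_affineSpan]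
  exact collinear_pair k p₀ p₁

theorem ContractingWith.mem_of_isFixedPt {α : Type*} [MetricSpace α] [CompleteSpace α]
    {K : NNReal} {f : α → α} (hf : ContractingWith K f) {s : Set α} (hs : IsClosed s)
    (hne : s.Nonempty) (hsf : MapsTo f s s) {p : α} (hp : IsFixedPt f p) : p ∈ s := by
  obtain ⟨x, hx⟩ := hne
  have : Nonempty α := ⟨x⟩
  rw [hf.fixedPoint_unique hp]
  exact hs.mem_of_tendsto (hf.tendsto_iterate_fixedPoint x)
    (Eventually.of_forall fun n => hsf.iterate n hx)

section Homothety

variable {E : Type*} [NormedAddCommGroup E] [NormedSpace ℝ E] {r : ℝ} (w : E)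

theorem contractingWith_homothety (hr : r ∈ Ico (0 : ℝ) 1) :
    ContractingWith (Real.toNNReal r) (fun x : E => r • x + w) := by
  refine ⟨by simpa using hr.2, LipschitzWith.of_dist_le_mul fun x y => ?_⟩
  simp [dist_smul₀, abs_of_nonneg hr.1, hr.1]

theorem isFixedPt_homothety (hr : r ≠ 1) :
    IsFixedPt (fun x : E => r • x + w) ((1 - r)⁻¹ • w) := by
  have : 1 - r ≠ 0 := sub_ne_zero.2 hr.symm
  change r • (1 - r)⁻¹ • w + w = (1 - r)⁻¹ • w
  match_scalars
  field_simp
  ring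

end Homothety

/-- The attractor is the intersection of the iterates of the Hutchinson operator `T`; injectivity
lets each `f j` commute with this decreasing intersection. -/
theorem exists_subset_eq_iUnion_image {α τ : Type*} [TopologicalSpace α] [T2Space α] [Finite τ]
    [Nonempty τ] {f : τ → α → α} (hcont : ∀ j, Continuous (f j)) (hinj : ∀ j, Injective (f j))
    {F : Set α} (hF : IsCompact F) (hne : F.Nonempty) (hmaps : ∀ j, MapsTo (f j) F F) :
    ∃ E ⊆ F, E.Nonempty ∧ IsCompact E ∧ E = ⋃ j, f j '' E := by
  set T : Set α → Set α := fun s => ⋃ j, f j '' s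
  have hT : Monotone T := fun s s' h => iUnion_mono fun j => image_mono h
  set K : ℕ → Set α := fun m => T^[m] F
  have hKsucc : ∀ m, K (m + 1) = T (K m) := fun m => iterate_succ_apply' T m F
  have hanti : Antitone K := antitone_nat_of_succ_le fun m => by
    induction m with
    | zero => exact iUnion_subset fun j => (hmaps j).image_subset
    | succ m ih => rw [hKsucc (m + 1), hKsucc m] at *; exact hT ih
  have hcpt : ∀ m, IsCompact (K m) := fun m => by
    induction m with
    | zero => exact hF
    | succ m ih => rw [hKsucc]; exact isCompact_iUnion fun j => ih.image (hcont j)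
  have hKne : ∀ m, (K m).Nonempty := fun m => by
    induction m with
    | zero => exact hne
    | succ m ih =>
      rw [hKsucc]
      exact (ih.image _).mono (subset_iUnion_of_subset (Classical.arbitrary τ) subset_rfl)
  refine ⟨⋂ m, K m, iInter_subset K 0,
    (hcpt 0).nonempty_iInter_of_sequence_nonempty_isCompact_isClosed K (fun m => hanti m.le_succ)
      hKne (fun m => (hcpt m).isClosed),
    (hcpt 0).of_isClosed_subset (isClosed_iInter fun m => (hcpt m).isClosed) (iInter_subset K 0),
    ?_⟩
  calc ⋂ m, K m = ⋂ m, K (m + 1) := (hanti.iInter_nat_add 1).symm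
    _ = ⋂ m, ⋃ j, f j '' K m := iInter_congr hKsucc
    _ = ⋃ j, ⋂ m, f j '' K m := iInter_iUnion_of_antitone fun j _ _ h => image_mono (hanti h)
    _ = ⋃ j, f j '' ⋂ m, K m := by simp only [(hinj _).injOn.image_iInter_eq]

namespace IFS

variable {ι α : Type*}

def wordMap (S : ι → α → α) : List ι → α → α
  | [] => id
  | i :: w => S i ∘ wordMap S w

variable {S : ι → α → α}

theorem wordMap_append (v w : List ι) : wordMap S (v ++ w) = wordMap S v ∘ wordMap S w := by
  induction v with
  | nil => rfl
  | cons i v ih => simp only [List.cons_append, wordMap, ih, comp_assoc]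

theorem mapsTo_wordMap {F : Set α} (h : ⋃ i, S i '' F ⊆ F) :
    ∀ w : List ι, MapsTo (wordMap S w) F F
  | [] => mapsTo_id F
  | i :: w => (mapsTo_iff_image_subset.2 ((subset_iUnion (fun i => S i '' F) i).trans h)).comp
      (mapsTo_wordMap h w)

theorem exists_length_eq_mem_image_wordMap {F : Set α} (h : F ⊆ ⋃ i, S i '' F) (m : ℕ) {x : α}
    (hx : x ∈ F) : ∃ w : List ι, w.length = m ∧ x ∈ wordMap S w '' F := by
  induction m generalizing x with
  | zero => exact ⟨[], rfl, x, hx, rfl⟩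
  | succ m ih =>
    obtain ⟨i, y, hy, rfl⟩ := mem_iUnion.1 (h hx)
    obtain ⟨w, hw, z, hz, rfl⟩ := ih hy
    exact ⟨i :: w, by simp [hw], z, hz, rfl⟩

theorem exists_ne_nil_prod_lt_mem_image_wordMap [Fintype ι] [Nonempty ι] {c : ι → ℝ}
    (hc : ∀ i, c i ∈ Ioo (0 : ℝ) 1) {F : Set α} (h : F ⊆ ⋃ i, S i '' F) {δ : ℝ} (hδ : 0 < δ)
    {x : α} (hx : x ∈ F) :
    ∃ w : List ι, w ≠ [] ∧ (w.map c).prod < δ ∧ x ∈ wordMap S w '' F := by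
  set r := Finset.univ.sup' Finset.univ_nonempty c
  have hcr : ∀ i, c i ≤ r := fun i => Finset.le_sup' c (Finset.mem_univ i)
  have hr1 : r < 1 := (Finset.sup'_lt_iff _).2 fun i _ => (hc i).2
  have hr0 : 0 ≤ r := (hc (Classical.arbitrary ι)).1.le.trans (hcr _)
  obtain ⟨n, hn⟩ := exists_pow_lt_of_lt_one hδ hr1
  obtain ⟨w, hlen, hxw⟩ := exists_length_eq_mem_image_wordMap h (n + 1) hx
  refine ⟨w, by rintro rfl; simp at hlen, ?_, hxw⟩
  calc (w.map c).prod ≤ (w.map fun _ => r).prod :=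
        List.prod_map_le_prod_map₀ c _ (fun i _ => (hc i).1.le) fun i _ => hcr i
    _ = r ^ (n + 1) := by simp [hlen]
    _ ≤ r ^ n := pow_le_pow_of_le_one hr0 hr1.le n.le_succ
    _ < δ := hn

section Similarity

variable {E : Type*} [NormedAddCommGroup E] [NormedSpace ℝ E] {c : ι → ℝ}
  {L : ι → E ≃ₗᵢ[ℝ] E} {t : ι → E} {S : ι → E → E}

theorem exists_wordMap_eq (hS : ∀ i x, S i x = c i • L i x + t i) (w : List ι) :
    ∃ d : E, ∀ x, wordMap S w x = (w.map c).prod • (w.map L).prod x + d := by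
  induction w with
  | nil => exact ⟨0, fun x => by simp [wordMap]⟩
  | cons i w ih =>
    obtain ⟨d, hd⟩ := ih
    refine ⟨c i • L i d + t i, fun x => ?_⟩
    simp only [wordMap, comp_apply, hd, hS, List.map_cons, List.prod_cons, map_add, map_smul,
      LinearIsometryEquiv.coe_mul, smul_add, smul_smul]
    abel

theorem dist_wordMap (hS : ∀ i x, S i x = c i • L i x + t i) (hc : ∀ i, 0 ≤ c i) (w : List ι)
    (x y : E) : dist (wordMap S w x) (wordMap S w y) = (w.map c).prod * dist x y := by
  obtain ⟨d, hd⟩ := exists_wordMap_eq hS w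
  have hprod : 0 ≤ (w.map c).prod := List.prod_nonneg (List.forall_mem_map.2 fun i _ => hc i)
  rw [hd, hd, dist_add_right, dist_smul₀, LinearIsometryEquiv.dist_map,
    Real.norm_of_nonneg hprod]

theorem exists_prod_eq_one_mapsTo_ball [Fintype ι] [Nonempty ι]
    (hS : ∀ i x, S i x = c i • L i x + t i) (hc : ∀ i, c i ∈ Ioo (0 : ℝ) 1) {F : Set E}
    (hF : F = ⋃ i, S i '' F) (hFb : Bornology.IsBounded F)
    (hfin : (Subgroup.closure (range L) : Set (E ≃ₗᵢ[ℝ] E)).Finite) {x : E} (hx : x ∈ F)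
    {ε : ℝ} (hε : 0 < ε) :
    ∃ u : List ι, u ≠ [] ∧ (u.map L).prod = 1 ∧ MapsTo (wordMap S u) F (ball x ε) := by
  obtain ⟨w, hw, hwc, z, hz, rfl⟩ :=
    exists_ne_nil_prod_lt_mem_image_wordMap hc hF.subset (δ := ε / (diam F + 1))
      (by positivity) hx
  have hwL : (w.map L).prod ∈ Subgroup.closure (range L) :=
    list_prod_mem (List.forall_mem_map.2 fun i _ => Subgroup.subset_closure (mem_range_self i))
  -- the group is finite, so the inverse of the linear part of `w` is spelled by a positive word
  obtain ⟨l, hl⟩ := Subgroup.exists_list_map_prod_eq_of_mem_closure hfin (inv_mem hwL)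
  refine ⟨w ++ l, by simp [hw], by simp [hl], fun y hy => ?_⟩
  have hly : wordMap S l y ∈ F := mapsTo_wordMap hF.superset l hy
  rw [mem_ball, wordMap_append, comp_apply, dist_wordMap hS (fun i => (hc i).1.le)]
  calc (w.map c).prod * dist (wordMap S l y) z ≤ (w.map c).prod * (diam F + 1) := by
        gcongr
        · exact List.prod_nonneg (List.forall_mem_map.2 fun i _ => (hc i).1.le)
        · linarith [dist_le_diam_of_mem hFb hly hz]
    _ < ε := (lt_div_iff₀ (by positivity)).1 hwc

theorem exists_append_wordMap_eq_homothety (hS : ∀ i x, S i x = c i • L i x + t i)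
    (hc : ∀ i, c i ∈ Ioo (0 : ℝ) 1) (u : Fin 3 → List ι) (hu : u 0 ≠ [])
    (hL : ∀ j, ((u j).map L).prod = 1) :
    ∃ r ∈ Ioo (0 : ℝ) 1, ∃ (W : Fin 3 → E) (v : Fin 3 → List ι),
      ∀ j, wordMap S (u j ++ v j) = fun x => r • x + W j := by
  -- each `u j ++ v j` is a rearrangement of `u 0 ++ u 1 ++ u 2`
  set v : Fin 3 → List ι := ![u 1 ++ u 2, u 0 ++ u 2, u 0 ++ u 1]
  set r := (((u 0).map c).prod * ((u 1).map c).prod) * ((u 2).map c).prod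
  have hvc : ∀ j, ((u j ++ v j).map c).prod = r := by
    intro j; fin_cases j <;> simp [v, r] <;> ring
  have hvL : ∀ j, ((u j ++ v j).map L).prod = 1 := by
    intro j; fin_cases j <;> simp [v, hL]
  have hr : r ∈ Ioo (0 : ℝ) 1 := by
    rw [← hvc 0]
    refine ⟨List.prod_pos (List.forall_mem_map.2 fun i _ => (hc i).1), ?_⟩
    simpa using List.prod_map_lt_prod_map (s := u 0 ++ v 0) (by simp [hu]) c (fun _ => 1)
      (fun i _ => (hc i).1) fun i _ => (hc i).2
  choose W hW using fun j => exists_wordMap_eq hS (u j ++ v j)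
  exact ⟨r, hr, W, v, fun j => funext fun x => by rw [hW, hvc, hvL]; rfl⟩

theorem exists_homotheties_mapsTo_fixedPoints_mem [Fintype ι] [Nonempty ι] [CompleteSpace E]
    (hS : ∀ i x, S i x = c i • L i x + t i) (hc : ∀ i, c i ∈ Ioo (0 : ℝ) 1) {F : Set E}
    (hF : F = ⋃ i, S i '' F) (hFc : IsCompact F) (hne : F.Nonempty)
    (hfin : (Subgroup.closure (range L) : Set (E ≃ₗᵢ[ℝ] E)).Finite) {x : Fin 3 → E}
    (hx : ∀ j, x j ∈ F) {U : Set (Fin 3 → E)} (hU : U ∈ 𝓝 x) :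
    ∃ r ∈ Ioo (0 : ℝ) 1, ∃ W : Fin 3 → E,
      (∀ j, MapsTo (fun y => r • y + W j) F F) ∧ (fun j => (1 - r)⁻¹ • W j) ∈ U := by
  obtain ⟨ε, hε, hεU⟩ := Metric.mem_nhds_iff.1 hU
  choose u hu hL huF using fun j =>
    exists_prod_eq_one_mapsTo_ball hS hc hF hFc.isBounded hfin (hx j) hε
  obtain ⟨r, hr, W, v, hW⟩ := exists_append_wordMap_eq_homothety hS hc u (hu 0) hL
  have hmaps : ∀ j, MapsTo (fun y => r • y + W j) F F := fun j => by
    rw [← hW]; exact mapsTo_wordMap hF.superset _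
  refine ⟨r, hr, W, hmaps, hεU ?_⟩
  rw [mem_ball, dist_pi_lt_iff hε]
  intro j
  have hfix := isFixedPt_homothety (W j) hr.2.ne
  have hmem := (contractingWith_homothety (W j) ⟨hr.1.le, hr.2⟩).mem_of_isFixedPt
    hFc.isClosed hne (hmaps j) hfix
  rw [← hW] at hfix
  rw [← hfix.eq, wordMap_append]
  exact huF j (mapsTo_wordMap hF.superset (v j) hmem)

end Similarity

end IFS

theorem stmt_9_general
    {ι : Type*} [Fintype ι] [Nonempty ι]
    (c : ι → ℝ) (hc : ∀ i, c i ∈ Set.Ioo (0 : ℝ) 1)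
    (A : ι → Matrix.orthogonalGroup (Fin 2) ℝ)
    (t : ι → EuclideanSpace ℝ (Fin 2))
    (S : ι → EuclideanSpace ℝ (Fin 2) → EuclideanSpace ℝ (Fin 2))
    (hS : ∀ i x, S i x
      = c i • (show EuclideanSpace ℝ (Fin 2) from WithLp.toLp 2 ((A i : Matrix (Fin 2) (Fin 2) ℝ).mulVec x))
        + t i)
    (F : Set (EuclideanSpace ℝ (Fin 2))) (hFne : F.Nonempty) (hFc : IsCompact F)
    (hattr : F = ⋃ i, S i '' F)
    (hline : ¬ Collinear ℝ F)
    (hdiscrete : (((Subgroup.closure (Set.range A) :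
        Subgroup (Matrix.orthogonalGroup (Fin 2) ℝ)) :
        Set (Matrix.orthogonalGroup (Fin 2) ℝ))).Finite) :
    ∃ (E : Set (EuclideanSpace ℝ (Fin 2))) (c₀ : ℝ)
      (w : Fin 3 → EuclideanSpace ℝ (Fin 2)),
      E ⊆ F ∧ E.Nonempty ∧ IsCompact E ∧ c₀ ∈ Set.Ioo (0 : ℝ) 1 ∧
      E = ⋃ j : Fin 3, (fun x => c₀ • x + w j) '' E ∧
      ¬ Collinear ℝ (Set.range fun j : Fin 3 => (1 - c₀)⁻¹ • w j) := by
  set φ := Matrix.orthogonalGroup.toLinearIsometryEquiv (Fin 2) with hφ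
  have hS' : ∀ i x, S i x = c i • (φ ∘ A) i x + t i := fun i x => by
    rw [hS, comp_apply, hφ, Matrix.orthogonalGroup.toLinearIsometryEquiv_apply]
  have hfin : (Subgroup.closure (range (φ ∘ A)) :
      Set (EuclideanSpace ℝ (Fin 2) ≃ₗᵢ[ℝ] EuclideanSpace ℝ (Fin 2))).Finite := by
    rw [range_comp, ← MonoidHom.map_closure]
    exact hdiscrete.image φ
  obtain ⟨x, hxF, hx⟩ := exists_affineIndependent_of_not_collinear hline
  obtain ⟨r, hr, W, hWF, hW⟩ := IFS.exists_homotheties_mapsTo_fixedPoints_mem hS' hc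
    hattr hFc hFne hfin hxF (isOpen_setOfPred_affineIndependent.mem_nhds hx)
  obtain ⟨E, hEF, hEne, hEc, hE⟩ := exists_subset_eq_iUnion_image (f := fun j y => r • y + W j)
    (fun j => by fun_prop)
    (fun j => (add_left_injective (W j)).comp (smul_right_injective _ hr.1.ne'))
    hFc hFne hWF
  exact ⟨E, r, W, hEF, hEne, hEc, hr, hE, affineIndependent_iff_not_collinear.1 hW⟩

/-- A planar self-similar set not contained in a line, with discrete (finite) group
generated by the orthogonal parts, contains a self-similar set `E` generated by three
homotheties with a common ratio, trivial orthogonal parts, and non-collinear fixed points. -/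
theorem stmt_9
    {ι : Type*} [Fintype ι] [Nonempty ι]
    (c : ι → ℝ) (hc : ∀ i, c i ∈ Set.Ioo (0 : ℝ) 1)
    (A : ι → Matrix.orthogonalGroup (Fin 2) ℝ)
    (t : ι → EuclideanSpace ℝ (Fin 2))
    (S : ι → EuclideanSpace ℝ (Fin 2) → EuclideanSpace ℝ (Fin 2))
    (hS : ∀ i x, S i x
      = c i • (show EuclideanSpace ℝ (Fin 2) from WithLp.toLp 2 ((A i : Matrix (Fin 2) (Fin 2) ℝ).mulVec x))
        + t i)
    (F : Set (EuclideanSpace ℝ (Fin 2))) (hFne : F.Nonempty) (hFc : IsCompact F)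
    (hFsub : ∀ x ∈ F, ∀ j, x j ∈ Set.Icc (0 : ℝ) 1)
    (hattr : F = ⋃ i, S i '' F)
    (hline : ¬ Collinear ℝ F)
    (hdiscrete : (((Subgroup.closure (Set.range A) :
        Subgroup (Matrix.orthogonalGroup (Fin 2) ℝ)) :
        Set (Matrix.orthogonalGroup (Fin 2) ℝ))).Finite) :
    ∃ (E : Set (EuclideanSpace ℝ (Fin 2))) (c₀ : ℝ)
      (w : Fin 3 → EuclideanSpace ℝ (Fin 2)),
      E ⊆ F ∧ E.Nonempty ∧ IsCompact E ∧ c₀ ∈ Set.Ioo (0 : ℝ) 1 ∧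
      E = ⋃ j : Fin 3, (fun x => c₀ • x + w j) '' E ∧
      ¬ Collinear ℝ (Set.range fun j : Fin 3 => (1 - c₀)⁻¹ • w j) :=
  stmt_9_general c hc A t S hS F hFne hFc hattr hline hdiscrete
end
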